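/- The family S of all trees over {0,1} containing a Sacks (perfect) tree, regarded as a subset of the Polish space Tree_2, is Σ¹₁-complete: it is analytic, and for every Polish space Y and every analytic set B ⊆ Y there is a Borel measurable function f : Y → Tree_2 whose preimage of S equals B. -/

import Mathlib

open MeasureTheory

/-- The Polish space `Tree_2` of all trees over `{0,1}` (subsets of `2^{<ω}` closed
under initial segments), as a subspace of the Cantor space `2^{2^{<ω}} ≅ P(2^{<ω})`. -/
abbrev Tree2 : Type :=
  {x : List Bool → Bool // ∀ σ τ : List Bool, x σ = true → τ <+: σ → x τ = true}

/-- `S ⊆ 2^{<ω}` is a tree: closed under initial segments. -/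
def IsTreeSet2 (S : Set (List Bool)) : Prop :=
  ∀ σ ∈ S, ∀ τ : List Bool, τ <+: σ → τ ∈ S

/-- A Sacks (perfect) tree: a nonempty tree in which every node extends to a
splitting node. -/
def IsSacksTree (S : Set (List Bool)) : Prop :=
  IsTreeSet2 S ∧ S.Nonempty ∧
    ∀ σ ∈ S, ∃ τ ∈ S, σ <+: τ ∧ τ ++ [false] ∈ S ∧ τ ++ [true] ∈ S

/-- The family `S` of all trees over `{0,1}` containing a Sacks tree. -/
def sacksFam : Set Tree2 :=
  {T | ∃ S : Set (List Bool), IsSacksTree S ∧ S ⊆ {σ | T.1 σ = true}}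


/-!
Given a continuous `f : (ℕ → ℕ) → Y` with range `B`, send `y` to the tree `T_y` of binary words
`σ` with `y ∈ closure (f '' C_σ)`, where `C_σ` is the set of sequences having a code that begins
with `σ`; a sequence is coded block by block, `k` as `b 1^k 0` with a free bit `b`. If `y = f x`,
the initial segments of codes of `x` form a Sacks tree inside `T_y`, perfect because of the free
bits. Conversely, choosing `false` at splitting nodes gives a branch of any Sacks subtree with
infinitely many `false`s, hence with infinitely many completed blocks; these decode to some `x`
with `y ∈ closure (f '' N_{x↾n})` for all `n`, so `y = f x` by continuity. Each `{y | σ ∈ T_y}`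
is closed, so `y ↦ T_y` is Borel. The family itself is analytic as the projection of the Borel
set of pairs (tree, Sacks subtree).
-/

open Set Filter Topology

section ListCylinder

variable {α : Type*}

def listCylinder (s : List α) : Set (ℕ → α) :=
  {x | ∀ i (hi : i < s.length), s[i] = x i}

lemma mem_listCylinder_append_singleton {s : List α} {a : α} {x : ℕ → α} :
    x ∈ listCylinder (s ++ [a]) ↔ x ∈ listCylinder s ∧ x s.length = a := by
  simp only [listCylinder, mem_ofPred_eq, List.length_append, List.length_singleton]
  refine ⟨fun h => ⟨fun i hi => ?_, ?_⟩, fun ⟨hs, ha⟩ i hi => ?_⟩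
  · rw [← h i (by omega), List.getElem_append_left hi]
  · rw [← h s.length (by omega), List.getElem_append_right le_rfl]
    simp
  · rcases Nat.lt_or_ge i s.length with hi' | hi'
    · rw [List.getElem_append_left hi', hs i hi']
    · obtain rfl : i = s.length := by omega
      simp [ha]

lemma listCylinder_subset_cylinder {s : List α} {x : ℕ → α} (hx : x ∈ listCylinder s) :
    listCylinder s ⊆ PiNat.cylinder x s.length :=
  fun _ hz i hi => (hz i hi).symm.trans (hx i hi)

lemma exists_forall_mem_listCylinder {L : ℕ → List α} (hL : ∀ m n, m ≤ n → L m <+: L n)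
    (hlen : ∀ i, ∃ n, i < (L n).length) : ∃ x, ∀ n, x ∈ listCylinder (L n) := by
  choose N hN using hlen
  refine ⟨fun i => (L (N i))[i]'(hN i), fun n i hi => ?_⟩
  rcases le_total n (N i) with h | h
  · exact (hL _ _ h).getElem hi
  · exact ((hL _ _ h).getElem (hN i)).symm

end ListCylinder

lemma eq_of_forall_mem_closure_image {X Y : Type*} [TopologicalSpace X] [TopologicalSpace Y]
    [T2Space Y] {f : X → Y} {x : X} (hf : ContinuousAt f x) {y : Y}
    (h : ∀ s ∈ 𝓝 x, y ∈ closure (f '' s)) : y = f x := by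
  have hy : ClusterPt y (map f (𝓝 x)) := clusterPt_iff_forall_mem_closure.2 fun t ht =>
    closure_mono (image_preimage_subset f t) (h _ ht)
  exact eq_of_nhds_neBot (hy.mono hf).neBot

lemma PiNat.eq_of_forall_mem_closure_image_cylinder {E : ℕ → Type*}
    [∀ n, TopologicalSpace (E n)] [∀ n, DiscreteTopology (E n)] {Y : Type*} [TopologicalSpace Y]
    [T2Space Y] {f : (∀ n, E n) → Y} {x : ∀ n, E n} (hf : ContinuousAt f x) {y : Y}
    (h : ∀ n, y ∈ closure (f '' cylinder x n)) : y = f x := by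
  refine eq_of_forall_mem_closure_image hf fun s hs => ?_
  obtain ⟨_, ⟨z, n, rfl⟩, hxz, hzs⟩ := (isTopologicalBasis_cylinders E).mem_nhds_iff.1 hs
  rw [← mem_cylinder_iff_eq.1 hxz] at hzs
  exact closure_mono (image_mono hzs) (h n)

namespace BlockCode

/-- The state is the list of values of the completed blocks, together with the number of `1`s
read so far in the current block (`none` before its free bit). -/
def decodeStep : List ℕ × Option ℕ → Bool → List ℕ × Option ℕ
  | (s, none), _ => (s, some 0)
  | (s, some k), true => (s, some (k + 1))
  | (s, some k), false => (s ++ [k], none)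

def decode (σ : List Bool) : List ℕ × Option ℕ :=
  σ.foldl decodeStep ([], none)

lemma decode_append_singleton (σ : List Bool) (b : Bool) :
    decode (σ ++ [b]) = decodeStep (decode σ) b := by
  simp [decode, List.foldl_append]

lemma decode_append_replicate_true {σ : List Bool} {s : List ℕ} {k : ℕ}
    (h : decode σ = (s, some k)) (j : ℕ) :
    decode (σ ++ List.replicate j true) = (s, some (k + j)) := by
  induction j with
  | zero => simpa using h
  | succ j ih =>
    rw [List.replicate_succ', ← List.append_assoc, decode_append_singleton, ih]
    rfl

lemma decode_fst_prefix {σ τ : List Bool} (h : σ <+: τ) : (decode σ).1 <+: (decode τ).1 := by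
  obtain ⟨t, rfl⟩ := h
  induction t using List.reverseRecOn with
  | nil => simp
  | append_singleton t b ih =>
    rw [← List.append_assoc, decode_append_singleton]
    refine ih.trans ?_
    rcases decode (σ ++ t) with ⟨s, _ | k⟩ <;> cases b <;> simp [decodeStep]

/-- A block contains at most two `false`s: its free bit and its terminator. -/
lemma count_false_le (σ : List Bool) :
    σ.count false ≤ 2 * (decode σ).1.length + ((decode σ).2.isSome).toNat := by
  induction σ using List.reverseRecOn with
  | nil => simp [decode]
  | append_singleton σ b ih =>
    rw [decode_append_singleton, List.count_append]
    rcases h : decode σ with ⟨s, _ | k⟩ <;> rw [h] at ih <;> cases b <;>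
      simp_all [decodeStep] <;> omega

def stateCyl : List ℕ × Option ℕ → Set (ℕ → ℕ)
  | (s, none) => listCylinder s
  | (s, some k) => {x ∈ listCylinder s | k ≤ x s.length}

/-- The sequences that have a code extending `σ`. -/
def codeCyl (σ : List Bool) : Set (ℕ → ℕ) :=
  stateCyl (decode σ)

lemma stateCyl_decodeStep_subset (p : List ℕ × Option ℕ) (b : Bool) :
    stateCyl (decodeStep p b) ⊆ stateCyl p := by
  rcases p with ⟨s, _ | k⟩
  · exact sep_subset _ _
  · cases b
    · intro x hx
      obtain ⟨hs, hk⟩ := mem_listCylinder_append_singleton.1 hx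
      exact ⟨hs, hk.ge⟩
    · exact fun x hx => ⟨hx.1, (Nat.le_succ k).trans hx.2⟩

lemma codeCyl_anti {σ τ : List Bool} (h : σ <+: τ) : codeCyl τ ⊆ codeCyl σ := by
  obtain ⟨t, rfl⟩ := h
  induction t using List.reverseRecOn with
  | nil => simp
  | append_singleton t b ih =>
    rw [← List.append_assoc, codeCyl, decode_append_singleton]
    exact (stateCyl_decodeStep_subset _ b).trans ih

lemma codeCyl_subset_listCylinder (σ : List Bool) : codeCyl σ ⊆ listCylinder (decode σ).1 := by
  rw [codeCyl]
  rcases decode σ with ⟨s, _ | k⟩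
  exacts [subset_rfl, sep_subset _ _]

lemma mem_codeCyl_append_singleton_of_none {x : ℕ → ℕ} {σ : List Bool}
    (hσ : (decode σ).2 = none) (hx : x ∈ codeCyl σ) (b : Bool) : x ∈ codeCyl (σ ++ [b]) := by
  rcases h : decode σ with ⟨s, _ | k⟩
  · rw [codeCyl, h] at hx
    rw [codeCyl, decode_append_singleton, h]
    exact ⟨hx, Nat.zero_le _⟩
  · simp [h] at hσ

lemma exists_none_of_mem_codeCyl {x : ℕ → ℕ} {σ : List Bool} (hx : x ∈ codeCyl σ) :
    ∃ τ, σ <+: τ ∧ (decode τ).2 = none ∧ x ∈ codeCyl τ := by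
  rcases h : decode σ with ⟨s, _ | k⟩
  · exact ⟨σ, List.prefix_rfl, by simp [h], hx⟩
  · rw [codeCyl, h] at hx
    obtain ⟨hs, hk⟩ := hx
    have hτ : decode (σ ++ List.replicate (x s.length - k) true ++ [false]) =
        (s ++ [x s.length], none) := by
      rw [decode_append_singleton, decode_append_replicate_true h, Nat.add_sub_cancel' hk]
      rfl
    refine ⟨σ ++ List.replicate (x s.length - k) true ++ [false],
      (List.prefix_append _ _).trans (List.prefix_append _ _), by rw [hτ], ?_⟩
    rw [codeCyl, hτ]
    exact mem_listCylinder_append_singleton.2 ⟨hs, rfl⟩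

lemma isSacksTree_setOf_mem_codeCyl (x : ℕ → ℕ) : IsSacksTree {σ | x ∈ codeCyl σ} := by
  refine ⟨fun σ hσ τ hτ => codeCyl_anti hτ hσ, ⟨[], fun i hi => by simp at hi⟩,
    fun σ hσ => ?_⟩
  obtain ⟨τ, hστ, hτ, hxτ⟩ := exists_none_of_mem_codeCyl hσ
  exact ⟨τ, hxτ, hστ, mem_codeCyl_append_singleton_of_none hτ hxτ _,
    mem_codeCyl_append_singleton_of_none hτ hxτ _⟩

end BlockCode

namespace IsSacksTree

variable {S : Set (List Bool)}

lemma nil_mem (hS : IsSacksTree S) : [] ∈ S :=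
  let ⟨σ, hσ⟩ := hS.2.1
  hS.1 σ hσ [] List.nil_prefix

lemma exists_prefix_count_false_lt (hS : IsSacksTree S) {σ : List Bool} (hσ : σ ∈ S) :
    ∃ τ ∈ S, σ <+: τ ∧ σ.count false < τ.count false := by
  obtain ⟨τ, -, hστ, hτ, -⟩ := hS.2.2 σ hσ
  refine ⟨τ ++ [false], hτ, hστ.trans (List.prefix_append _ _), ?_⟩
  rw [List.count_append]
  have := hστ.sublist.count_le false
  simp only [List.count_singleton_self]
  omega

lemma exists_chain (hS : IsSacksTree S) : ∃ g : ℕ → List Bool,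
    (∀ n, g n ∈ S) ∧ (∀ m n, m ≤ n → g m <+: g n) ∧ ∀ n, n ≤ (g n).count false := by
  choose! next hnext_mem hnext_prefix hnext_count using
    fun σ (hσ : σ ∈ S) => hS.exists_prefix_count_false_lt hσ
  let g : ℕ → List Bool := fun n => Nat.rec [] (fun _ σ => next σ) n
  have hg : ∀ n, g n ∈ S ∧ n ≤ (g n).count false := by
    intro n
    induction n with
    | zero => exact ⟨hS.nil_mem, Nat.zero_le _⟩
    | succ n ih => exact ⟨hnext_mem _ ih.1, ih.2.trans_lt (hnext_count _ ih.1)⟩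
  refine ⟨g, fun n => (hg n).1, fun m n hmn => ?_, fun n => (hg n).2⟩
  induction hmn with
  | refl => exact List.prefix_rfl
  | step _ ih => exact ih.trans (hnext_prefix _ (hg _).1)

end IsSacksTree

section Reduction

open BlockCode

variable {Y : Type*} [TopologicalSpace Y] (f : (ℕ → ℕ) → Y)

noncomputable def reductionTree (y : Y) : Tree2 :=
  ⟨fun σ => (closure (f '' codeCyl σ)).boolIndicator y, fun σ τ hσ hτ => by
    rw [← mem_iff_boolIndicator] at hσ ⊢
    exact closure_mono (image_mono (codeCyl_anti hτ)) hσ⟩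

variable {f}

lemma reductionTree_apply_eq_true {y : Y} {σ : List Bool} :
    (reductionTree f y).1 σ = true ↔ y ∈ closure (f '' codeCyl σ) :=
  (mem_iff_boolIndicator _ _).symm

lemma measurable_reductionTree [MeasurableSpace Y] [OpensMeasurableSpace Y] :
    Measurable (reductionTree f) :=
  (measurable_pi_lambda _ fun σ => measurable_to_bool <| by
    rw [preimage_boolIndicator_true]
    exact isClosed_closure.measurableSet).subtype_mk

lemma reductionTree_mem_sacksFam (x : ℕ → ℕ) : reductionTree f (f x) ∈ sacksFam :=
  ⟨_, isSacksTree_setOf_mem_codeCyl x, fun _ hσ =>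
    reductionTree_apply_eq_true.2 (subset_closure (mem_image_of_mem f hσ))⟩

lemma mem_range_of_reductionTree_mem_sacksFam [T2Space Y] (hf : Continuous f) {y : Y}
    (hy : reductionTree f y ∈ sacksFam) : y ∈ range f := by
  obtain ⟨S, hS, hST⟩ := hy
  obtain ⟨g, hgS, hg_mono, hg_count⟩ := hS.exists_chain
  have hlen : ∀ i, ∃ n, i < (decode (g n)).1.length := fun i => by
    refine ⟨2 * i + 2, ?_⟩
    have := (hg_count _).trans (count_false_le (g (2 * i + 2)))
    have := Bool.toNat_le (decode (g (2 * i + 2))).2.isSome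
    omega
  obtain ⟨x, hx⟩ :=
    exists_forall_mem_listCylinder (fun m n h => decode_fst_prefix (hg_mono m n h)) hlen
  refine ⟨x, (PiNat.eq_of_forall_mem_closure_image_cylinder hf.continuousAt fun i => ?_).symm⟩
  obtain ⟨n, hn⟩ := hlen i
  have hy : y ∈ closure (f '' codeCyl (g n)) := reductionTree_apply_eq_true.1 (hST (hgS n))
  refine closure_mono (image_mono ?_) hy
  exact (codeCyl_subset_listCylinder _).trans
    ((listCylinder_subset_cylinder (hx n)).trans (PiNat.cylinder_anti _ hn.le))

lemma preimage_reductionTree_sacksFam [T2Space Y] (hf : Continuous f) :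
    reductionTree f ⁻¹' sacksFam = range f :=
  Subset.antisymm (fun _ => mem_range_of_reductionTree_mem_sacksFam hf)
    (range_subset_iff.2 reductionTree_mem_sacksFam)

end Reduction

section Analytic

lemma isClosed_setOf_isTree :
    IsClosed {x : List Bool → Bool | ∀ σ τ : List Bool, x σ = true → τ <+: σ → x τ = true} := by
  simp only [ofPred_forall]
  exact isClosed_iInter fun σ => isClosed_iInter fun τ =>
    isClosed_imp ((isOpen_discrete {true}).preimage (continuous_apply σ :
      Continuous fun x : List Bool → Bool => x σ))
      (isClosed_imp isOpen_const (isClosed_eq (continuous_apply τ) continuous_const))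

instance : PolishSpace (List Bool → Bool) where

instance : PolishSpace Tree2 :=
  isClosed_setOf_isTree.polishSpace

def sacksPairs : Set (Tree2 × (List Bool → Bool)) :=
  {p | IsSacksTree {σ | p.2 σ = true} ∧ {σ | p.2 σ = true} ⊆ {σ | p.1.1 σ = true}}

lemma measurableSet_sacksPairs : MeasurableSet sacksPairs := by
  have hev (σ : List Bool) : Measurable fun p : Tree2 × (List Bool → Bool) => p.1.1 σ :=
    (measurable_pi_apply σ).comp (measurable_subtype_coe.comp measurable_fst)
  simp only [sacksPairs, IsSacksTree, IsTreeSet2, Set.Nonempty, subset_def, mem_ofPred_eq]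
  exact measurableSet_setOfPred.2 (by fun_prop)

lemma sacksFam_eq_image_fst : sacksFam = Prod.fst '' sacksPairs := by
  ext T
  constructor
  · rintro ⟨S, hS, hST⟩
    have hχ : {σ | S.boolIndicator σ = true} = S := by
      simp only [← mem_iff_boolIndicator, ofPred_mem_eq]
    refine ⟨(T, S.boolIndicator), ?_, rfl⟩
    change IsSacksTree {σ | S.boolIndicator σ = true} ∧ {σ | S.boolIndicator σ = true} ⊆ _
    rw [hχ]
    exact ⟨hS, hST⟩
  · rintro ⟨⟨_, χ⟩, hχ, rfl⟩
    exact ⟨_, hχ⟩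

lemma analyticSet_sacksFam : AnalyticSet sacksFam := by
  rw [sacksFam_eq_image_fst]
  exact measurableSet_sacksPairs.analyticSet.image_of_continuous continuous_fst

lemma exists_not_mem_sacksFam : ∃ T, T ∉ sacksFam :=
  ⟨⟨fun _ => false, by simp⟩, fun ⟨_, ⟨_, ⟨σ, hσ⟩, _⟩, hST⟩ => by simpa using hST hσ⟩

end Analytic

/-- The family of trees containing a Sacks tree is `Σ¹₁`-complete: it is analytic,
and every analytic subset of every Polish space Borel-reduces to it. -/
theorem sacksFam_analytic_complete :
    AnalyticSet sacksFam ∧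
      ∀ (Y : Type) [TopologicalSpace Y] [PolishSpace Y]
        [MeasurableSpace Y] [BorelSpace Y] (B : Set Y),
        AnalyticSet B →
          ∃ f : Y → Tree2, Measurable f ∧ f ⁻¹' sacksFam = B := by
  refine ⟨analyticSet_sacksFam, fun Y _ _ _ _ B hB => ?_⟩
  rcases AnalyticSet_def B ▸ hB with rfl | ⟨f, hf, rfl⟩
  · obtain ⟨T, hT⟩ := exists_not_mem_sacksFam
    exact ⟨fun _ => T, measurable_const, preimage_const_of_notMem hT⟩
  · exact ⟨reductionTree f, measurable_reductionTree, preimage_reductionTree_sacksFam hf⟩
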